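/- Let W ⊆ ℙ^m be an irreducible non-degenerate projective variety, X = W × ℙ^r embedded in ℙ^N via the Segre embedding of ℙ^m × ℙ^r, p ∈ ℙ^r a point, and H_Z = ⟨W × {p}⟩. Then X ∩ H_Z = W × {p} as sets. -/
import Mathlib


/-- Let `W ⊆ ℙ^m` be an irreducible non-degenerate projective variety (modelled by its
affine cone of nonzero representative vectors), `X = W × ℙ^r` Segre-embedded via
rank-one matrices `w qᵀ`, `p ∈ ℙ^r` a point and `H_Z = ⟨W × {p}⟩`. Then
`X ∩ H_Z = W × {p}` as sets. -/
theorem stmt12 (m r : ℕ) (W : Set (Fin (m + 1) → ℂ))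
    (hW0 : ∀ w ∈ W, w ≠ 0)
    (hcone : ∀ c : ℂ, c ≠ 0 → ∀ w ∈ W, c • w ∈ W)
    (hirr : IsIrreducible W)
    (hnondeg : Submodule.span ℂ W = ⊤)
    (p : Fin (r + 1) → ℂ) (hp : p ≠ 0) :
    {M : Matrix (Fin (m + 1)) (Fin (r + 1)) ℂ |
        ∃ w ∈ W, ∃ q : Fin (r + 1) → ℂ, q ≠ 0 ∧ M = Matrix.vecMulVec w q} ∩
      (Submodule.span ℂ
        {M : Matrix (Fin (m + 1)) (Fin (r + 1)) ℂ | ∃ w ∈ W, M = Matrix.vecMulVec w p} : Set _)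
    = {M : Matrix (Fin (m + 1)) (Fin (r + 1)) ℂ |
        ∃ w ∈ W, ∃ c : ℂ, c ≠ 0 ∧ M = Matrix.vecMulVec w (c • p)} := by
  -- the linear map v ↦ v pᵀ
  set L : (Fin (m + 1) → ℂ) →ₗ[ℂ] Matrix (Fin (m + 1)) (Fin (r + 1)) ℂ :=
    { toFun := fun v => Matrix.vecMulVec v p
      map_add' := by
        intro x y
        ext i j
        simp [Matrix.vecMulVec_apply, add_mul]
      map_smul' := by
        intro c x
        ext i j
        simp [Matrix.vecMulVec_apply, mul_assoc] } with hL
  have hSet : {M : Matrix (Fin (m + 1)) (Fin (r + 1)) ℂ | ∃ w ∈ W, M = Matrix.vecMulVec w p}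
      = L '' W := by
    ext M
    constructor
    · rintro ⟨w, hw, rfl⟩; exact ⟨w, hw, rfl⟩
    · rintro ⟨w, hw, rfl⟩; exact ⟨w, hw, rfl⟩
  have hspan : Submodule.span ℂ
      {M : Matrix (Fin (m + 1)) (Fin (r + 1)) ℂ | ∃ w ∈ W, M = Matrix.vecMulVec w p}
      = LinearMap.range L := by
    rw [hSet, ← Submodule.map_span, hnondeg, Submodule.map_top]
  ext M
  constructor
  · rintro ⟨⟨w, hw, q, hq, rfl⟩, hMspan⟩
    rw [SetLike.mem_coe, hspan] at hMspan
    obtain ⟨v, hv⟩ := hMspan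
    -- hv : vecMulVec v p = vecMulVec w q
    obtain ⟨i, hi⟩ := Function.ne_iff.mp (hW0 w hw)
    have hwi : w i ≠ 0 := by simpa using hi
    have hentry : ∀ j, w i * q j = v i * p j := by
      intro j
      have := congrFun (congrFun hv i) j
      simpa [hL, Matrix.vecMulVec_apply] using this.symm
    have hqc : q = (v i / w i) • p := by
      funext j
      have := hentry j
      rw [Pi.smul_apply, smul_eq_mul]
      field_simp
      linear_combination this
    have hc : v i / w i ≠ 0 := by
      intro h
      apply hq
      rw [hqc, h, zero_smul]
    exact ⟨w, hw, v i / w i, hc, by rw [hqc]⟩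
  · rintro ⟨w, hw, c, hc, rfl⟩
    refine ⟨⟨w, hw, c • p, ?_, rfl⟩, ?_⟩
    · simpa [smul_eq_zero, hc] using hp
    · rw [SetLike.mem_coe, hspan]
      refine ⟨c • w, ?_⟩
      ext i j
      simp [hL, Matrix.vecMulVec_apply, mul_assoc, mul_left_comm]
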